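/- Let q ≥ 4 be a prime power. Deleting from the incidence matrix of C2(q) the first row and the q columns corresponding to blocks through the first point yields an optimal (q-1)-uniform CBC C3(q) with n = q²-3, N = (q-1)(q²-3), k = m = q²-q-1, which attains the bound n(m,c,k) ≤ ⌊(k-1)·C(m,c)/C(k-1,c)⌋ with equality. -/

import Mathlib

/-- A transversal design TD(ℓ,h): points `α`, `ℓ` groups of size `h`, blocks of size `ℓ`
meeting each group in exactly one point, every pair of points from different groups in
exactly one block. -/
structure TD (α : Type) [DecidableEq α] [Fintype α] (ℓ h : ℕ) where
  groups : Finset (Finset α)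
  blocks : Finset (Finset α)
  card_points : Fintype.card α = ℓ * h
  groups_card : groups.card = ℓ
  group_size : ∀ G ∈ groups, G.card = h
  groups_partition : ∀ x : α, ∃! G, G ∈ groups ∧ x ∈ G
  block_size : ∀ B ∈ blocks, B.card = ℓ
  block_meets_group : ∀ B ∈ blocks, ∀ G ∈ groups, (B ∩ G).card = 1
  pair_unique : ∀ x y : α, x ≠ y → (∀ G ∈ groups, ¬(x ∈ G ∧ y ∈ G)) →
    ∃! B, B ∈ blocks ∧ x ∈ B ∧ y ∈ B

/-- A resolvable transversal design: the blocks are partitioned into `h` parallel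
classes of `h` pairwise disjoint blocks, each class covering every point exactly once. -/
structure RTD (α : Type) [DecidableEq α] [Fintype α] (ℓ h : ℕ) extends TD α ℓ h where
  classes : Finset (Finset (Finset α))
  classes_card : classes.card = h
  class_sub : ∀ C ∈ classes, C ⊆ blocks
  class_card : ∀ C ∈ classes, C.card = h
  class_cover : ∀ C ∈ classes, ∀ x : α, ∃! B, B ∈ C ∧ x ∈ B
  block_class : ∀ B ∈ blocks, ∃! C, C ∈ classes ∧ B ∈ C

/-! Write `c = q - 1`. The columns of `C3(q)` are the `q² - q` blocks of the transversal design
that avoid the deleted point and `q - 3` groups with their first point removed: all have `c`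
points, two of them share at most one point, and each of the `c² + c - 1` remaining points lies
in at least `c` of them (it lies in `q` blocks, at most one of which also contains the deleted
point). Let `R` be a set of columns covering a set `U` with `#U < #R`. Counting pairs of points
inside columns gives `#R · C(c,2) ≤ C(#U,2)`, impossible while `#R ≤ c(c-1) + 2`. For larger
`R`, take `d + 1` points outside `U`, where `d = c² + c - 1 - #R ≤ 2c - 4`: they lie on at least
`(d+1)c - C(d+1,2)` columns outside `R`, but only `c - 1 + d` such columns exist.

The uniform bound equals `(k-1)k/(k-c) = q² - 2 - 1/q` for `k = q² - q - 1`. -/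

open Finset

lemma Nat.sub_one_le_choose_two (n : ℕ) : n - 1 ≤ n.choose 2 := by
  rcases n with _ | m
  · simp
  · rw [Nat.choose_succ_succ', Nat.choose_one_right]
    omega

lemma Nat.cast_choose_div_choose_sub_one {K : Type*} [Field K] [CharZero K] {k c : ℕ}
    (h : c < k) : (k.choose c : K) / ((k - 1).choose c : ℕ) = k / (k - c) := by
  have hrec := Nat.choose_mul_succ_eq (k - 1) c
  rw [Nat.sub_add_cancel (by omega)] at hrec
  have hpos : ((k - 1).choose c : K) ≠ 0 := by
    exact_mod_cast (Nat.choose_pos (by omega)).ne'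
  have hkc : (k : K) - c ≠ 0 := sub_ne_zero.2 (by exact_mod_cast h.ne')
  rw [div_eq_div_iff hpos hkc]
  have hrecK := congrArg (Nat.cast (R := K)) hrec
  push_cast [Nat.cast_sub h.le] at hrecK
  linear_combination -hrecK

section LinearFamily

variable {α : Type*} [DecidableEq α]

def IsLinearFamily (F : Finset (Finset α)) : Prop :=
  (F : Set (Finset α)).Pairwise fun X Y => #(X ∩ Y) ≤ 1

namespace IsLinearFamily

variable {F G : Finset (Finset α)}

lemma mono (hF : IsLinearFamily F) (hG : G ⊆ F) : IsLinearFamily G :=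
  Set.Pairwise.mono (coe_subset.2 hG) hF

lemma union (hF : IsLinearFamily F) (hG : IsLinearFamily G)
    (hFG : ∀ X ∈ F, ∀ Y ∈ G, #(X ∩ Y) ≤ 1) : IsLinearFamily (F ∪ G) := by
  have : Std.Symm fun X Y : Finset α => #(X ∩ Y) ≤ 1 := ⟨fun X Y h => by rwa [inter_comm]⟩
  rw [IsLinearFamily, coe_union, Set.pairwise_union_of_symm]
  exact ⟨hF, hG, fun X hX Y hY _ => hFG X hX Y hY⟩

lemma card_filter_subset_le_one (hF : IsLinearFamily F) {p : Finset α} (hp : 2 ≤ #p) :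
    #{X ∈ F | p ⊆ X} ≤ 1 := by
  refine card_le_one.2 fun X hX Y hY => ?_
  rw [mem_filter] at hX hY
  by_contra hXY
  have := card_le_card (subset_inter hX.2 hY.2)
  have := hF hX.1 hY.1 hXY
  omega

lemma sum_choose_two_card_inter_le (hF : IsLinearFamily F) (T : Finset α) :
    ∑ X ∈ F, (#(T ∩ X)).choose 2 ≤ (#T).choose 2 := by
  have hpairs : ∀ X, (T ∩ X).powersetCard 2 = {p ∈ T.powersetCard 2 | p ⊆ X} := fun X => by
    ext p
    simp only [mem_powersetCard, mem_filter, subset_inter_iff]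
    tauto
  calc ∑ X ∈ F, (#(T ∩ X)).choose 2
      = ∑ X ∈ F, #((T.powersetCard 2).bipartiteAbove (fun X p => p ⊆ X) X) := by
        simp only [← card_powersetCard, hpairs, bipartiteAbove]
    _ = ∑ p ∈ T.powersetCard 2, #(F.bipartiteBelow (fun X p => p ⊆ X) p) :=
        sum_card_bipartiteAbove_eq_sum_card_bipartiteBelow _
    _ ≤ #(T.powersetCard 2) • 1 := sum_le_card_nsmul _ _ _ fun p hp =>
        hF.card_filter_subset_le_one (mem_powersetCard.1 hp).2.ge
    _ = (#T).choose 2 := by rw [card_powersetCard, smul_eq_mul, mul_one]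

lemma card_mul_choose_two_le (hF : IsLinearFamily F) {c : ℕ} (hc : ∀ X ∈ F, c ≤ #X) :
    #F * c.choose 2 ≤ (#(F.biUnion id)).choose 2 :=
  calc #F * c.choose 2 = ∑ _X ∈ F, c.choose 2 := by rw [sum_const, smul_eq_mul]
    _ ≤ ∑ X ∈ F, (#(F.biUnion id ∩ X)).choose 2 := sum_le_sum fun X hX => by
        have hXF : X ⊆ F.biUnion id := subset_biUnion_of_mem id hX
        rw [inter_eq_right.2 hXF]
        exact Nat.choose_le_choose 2 (hc X hX)
    _ ≤ _ := hF.sum_choose_two_card_inter_le _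

lemma sum_card_inter_le (hF : IsLinearFamily F) (T : Finset α) :
    ∑ X ∈ F, #(T ∩ X) ≤ #{X ∈ F | ¬Disjoint T X} + (#T).choose 2 :=
  calc ∑ X ∈ F, #(T ∩ X)
      ≤ ∑ X ∈ F, ((if ¬Disjoint T X then 1 else 0) + (#(T ∩ X)).choose 2) :=
        sum_le_sum fun X _ => by
          by_cases h : Disjoint T X
          · simp [disjoint_iff_inter_eq_empty.1 h]
          · have := Nat.sub_one_le_choose_two #(T ∩ X)
            rw [if_pos h]
            omega
    _ ≤ #{X ∈ F | ¬Disjoint T X} + (#T).choose 2 := by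
        rw [sum_add_distrib, card_filter]
        exact Nat.add_le_add_left (hF.sum_choose_two_card_inter_le T) _

lemma card_le_card_biUnion_of_card_le (hF : IsLinearFamily F) {c : ℕ} (hc : 2 ≤ c)
    (hsize : ∀ X ∈ F, c ≤ #X) (hFc : #F ≤ c * (c - 1) + 2) : #F ≤ #(F.biUnion id) := by
  by_contra! hU
  have hpairs := (hF.card_mul_choose_two_le hsize).trans
    (Nat.choose_le_choose 2 (Nat.le_sub_one_of_lt hU))
  obtain ⟨s, hs⟩ : ∃ s, #F = s + 1 := ⟨#F - 1, by omega⟩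
  rw [hs, Nat.add_sub_cancel] at hpairs
  have hm : (2 : ℚ) ≤ c * (c - 1) := by
    have : (2 : ℚ) ≤ c := by exact_mod_cast hc
    nlinarith
  have hsm : (s : ℚ) - 1 ≤ c * (c - 1) := by
    have := Nat.cast_le (α := ℚ).2 (hs ▸ hFc)
    push_cast [Nat.cast_sub (by omega : 1 ≤ c)] at this
    linarith
  have := Nat.cast_le (α := ℚ).2 hpairs
  push_cast [Nat.cast_choose_two] at this
  nlinarith [mul_le_mul_of_nonneg_left hsm (Nat.cast_nonneg (α := ℚ) s)]

lemma card_mul_le_of_disjoint_biUnion (hF : IsLinearFamily F) {R : Finset (Finset α)}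
    (hR : R ⊆ F) {T : Finset α} {c : ℕ} (hdeg : ∀ x ∈ T, c ≤ #{X ∈ F | x ∈ X})
    (hT : Disjoint T (R.biUnion id)) : #T * c ≤ #F - #R + (#T).choose 2 := by
  have hmeet : #{X ∈ F | ¬Disjoint T X} ≤ #F - #R := by
    rw [← card_sdiff_of_subset hR]
    refine card_le_card fun X hX => ?_
    rw [mem_filter] at hX
    exact mem_sdiff.2 ⟨hX.1, fun hXR => hX.2 (hT.mono_right (subset_biUnion_of_mem id hXR))⟩
  calc #T * c ≤ ∑ X ∈ F, #(T ∩ X) := le_sum_card_inter hdeg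
    _ ≤ #{X ∈ F | ¬Disjoint T X} + (#T).choose 2 := hF.sum_card_inter_le T
    _ ≤ #F - #R + (#T).choose 2 := Nat.add_le_add_right hmeet _

end IsLinearFamily

theorem card_le_card_biUnion_of_isLinearFamily {F R : Finset (Finset α)} {V : Finset α} {c : ℕ}
    (hF : IsLinearFamily F) (hc : 2 ≤ c) (hsize : ∀ X ∈ F, c ≤ #X)
    (hdeg : ∀ x ∈ V, c ≤ #{X ∈ F | x ∈ X}) (hV : #V ≤ c ^ 2 + c - 1)
    (hFV : #F ≤ #V + c - 1)
    (hR : R ⊆ F) (hRV : #R ≤ #V) : #R ≤ #(R.biUnion id) := by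
  rcases le_or_gt #R (c * (c - 1) + 2) with hsmall | hlarge
  · exact (hF.mono hR).card_le_card_biUnion_of_card_le hc (fun X hX => hsize X (hR hX)) hsmall
  by_contra! hU
  set d := #V - #R
  obtain ⟨T, hTV, hT⟩ := exists_subset_card_eq
    ((show d + 1 ≤ #V - #(R.biUnion id) by omega).trans (le_card_sdiff _ V))
  have hinc := hF.card_mul_le_of_disjoint_biUnion hR (fun x hx => hdeg x (sdiff_subset (hTV hx)))
    (disjoint_of_subset_left hTV sdiff_disjoint)
  have hd : d + 4 ≤ 2 * c := by
    have : c * (c - 1) + 2 * c = c ^ 2 + c := by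
      obtain ⟨b, rfl⟩ : ∃ b, c = b + 1 := ⟨c - 1, by omega⟩
      simp only [Nat.add_sub_cancel]
      ring
    omega
  have hinc' : (d + 1) * c ≤ d + c - 1 + (d + 1).choose 2 := by
    rw [hT] at hinc
    omega
  have hinc'' := Nat.cast_le (α := ℚ).2 hinc'
  have hd' := Nat.cast_le (α := ℚ).2 hd
  push_cast [Nat.cast_choose_two, Nat.cast_sub (by omega : 1 ≤ d + c)] at hinc'' hd'
  nlinarith [mul_le_mul_of_nonneg_left (show (d : ℚ) + 3 - 2 * c ≤ -1 by linarith)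
    (Nat.cast_nonneg (α := ℚ) d)]

end LinearFamily

namespace TD

variable {α : Type} [DecidableEq α] [Fintype α] {ℓ h : ℕ} (D : TD α ℓ h)

lemma card_inter_block_le_one {X G B : Finset α} (hG : G ∈ D.groups) (hXG : X ⊆ G)
    (hB : B ∈ D.blocks) : #(X ∩ B) ≤ 1 := by
  rw [← D.block_meets_group B hB G hG, inter_comm B]
  exact card_le_card (inter_subset_inter_right hXG)

lemma isLinearFamily_blocks : IsLinearFamily D.blocks := by
  intro B hB B' hB' hne
  by_contra! h2
  obtain ⟨x, hx, y, hy, hxy⟩ := one_lt_card.1 h2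
  rw [mem_inter] at hx hy
  by_cases hgroup : ∃ G ∈ D.groups, x ∈ G ∧ y ∈ G
  · obtain ⟨G, hG, hxG, hyG⟩ := hgroup
    have := D.card_inter_block_le_one hG (insert_subset hxG (singleton_subset_iff.2 hyG)) hB
    rw [inter_eq_left.2 (insert_subset hx.1 (singleton_subset_iff.2 hy.1)), card_pair hxy] at this
    omega
  · push Not at hgroup
    obtain ⟨_, -, huniq⟩ := D.pair_unique x y hxy fun G hG hxy => hgroup G hG hxy.1 hxy.2
    exact hne ((huniq B ⟨hB, hx.1, hy.1⟩).trans (huniq B' ⟨hB', hx.2, hy.2⟩).symm)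

end TD

namespace RTD

variable {α : Type} [DecidableEq α] [Fintype α] {ℓ h : ℕ} (D : RTD α ℓ h)

lemma blocks_eq_biUnion_classes : D.blocks = D.classes.biUnion id := by
  ext B
  simp only [mem_biUnion, id]
  refine ⟨fun hB => ?_, fun ⟨C, hC, hBC⟩ => D.class_sub C hC hBC⟩
  obtain ⟨C, hC, -⟩ := D.block_class B hB
  exact ⟨C, hC⟩

lemma pairwiseDisjoint_classes : (D.classes : Set (Finset (Finset α))).PairwiseDisjoint id := by
  intro C hC C' hC' hne
  refine disjoint_left.2 fun B hBC hBC' => hne ?_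
  obtain ⟨_, -, huniq⟩ := D.block_class B (D.class_sub C hC hBC)
  exact (huniq C ⟨hC, hBC⟩).trans (huniq C' ⟨hC', hBC'⟩).symm

lemma card_blocks : #D.blocks = h * h := by
  rw [D.blocks_eq_biUnion_classes, card_biUnion D.pairwiseDisjoint_classes]
  exact (sum_const_nat D.class_card).trans (by rw [D.classes_card])

lemma card_blocks_filter_mem (x : α) : #{B ∈ D.blocks | x ∈ B} = h := by
  rw [D.blocks_eq_biUnion_classes, filter_biUnion, card_biUnion
    (D.pairwiseDisjoint_classes.mono fun C => filter_subset _ _)]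
  refine (sum_const_nat fun C hC => card_eq_one.2 ?_).trans (by rw [D.classes_card, mul_one])
  obtain ⟨B, hB, huniq⟩ := D.class_cover C hC x
  exact ⟨B, by ext B'; simpa using ⟨fun h => huniq B' h, fun h => h ▸ hB⟩⟩

lemma sub_one_le_card_blocks_filter_mem_notMem {x p : α} (hxp : x ≠ p) :
    h - 1 ≤ #{B ∈ D.blocks | x ∈ B ∧ p ∉ B} := by
  have hsplit := card_filter_add_card_filter_not (s := {B ∈ D.blocks | x ∈ B}) (p ∈ ·)
  have hboth : #{B ∈ D.blocks | x ∈ B ∧ p ∈ B} ≤ 1 := by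
    refine le_of_eq_of_le ?_ (D.isLinearFamily_blocks.card_filter_subset_le_one (card_pair hxp).ge)
    simp only [insert_subset_iff, singleton_subset_iff]
  simp only [D.card_blocks_filter_mem, filter_filter] at hsplit
  omega

lemma card_blocks_filter_notMem (p : α) : #{B ∈ D.blocks | p ∉ B} = h * h - h := by
  have := card_filter_add_card_filter_not (s := D.blocks) (p ∈ ·)
  rw [D.card_blocks_filter_mem, D.card_blocks] at this
  omega

end RTD

section ExtraColumns

/-- The `i`-th extra column of `C2(q)`: the `(i-1)`-th group `{(i-1)q, …, iq-1}` without its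
first point. -/
def extraColumn (q i : ℕ) : Finset (Fin (q * (q - 1))) :=
  univ.filter fun x => (i - 1) * q + 1 ≤ x.val ∧ x.val ≤ i * q - 1

variable {q i : ℕ}

lemma mem_extraColumn {x : Fin (q * (q - 1))} :
    x ∈ extraColumn q i ↔ (i - 1) * q + 1 ≤ x.val ∧ x.val ≤ i * q - 1 := by
  simp [extraColumn]

lemma extraColumn_subset_group (hi : 1 ≤ i) : extraColumn q i ⊆
    univ.filter fun x : Fin (q * (q - 1)) => (i - 1) * q ≤ x.val ∧ x.val < (i - 1 + 1) * q := by
  intro x hx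
  rw [mem_extraColumn] at hx
  rw [mem_filter, Nat.sub_add_cancel hi]
  exact ⟨mem_univ x, by omega, by omega⟩

lemma card_extraColumn (hi : 1 ≤ i) (hiq : i < q) : #(extraColumn q i) = q - 1 := by
  have hle : i * q ≤ q * (q - 1) := by
    rw [mul_comm q]
    exact Nat.mul_le_mul_right q (by omega)
  have hlo : q ≤ i * q := Nat.le_mul_of_pos_left q hi
  have hsub : (i - 1) * q = i * q - q := Nat.sub_one_mul i q
  have hIcc : extraColumn q i =
      Icc (⟨(i - 1) * q + 1, by omega⟩ : Fin (q * (q - 1))) ⟨i * q - 1, by omega⟩ := by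
    ext x
    simp only [mem_extraColumn, mem_Icc, Fin.le_def]
  rw [hIcc, Fin.card_Icc]
  change i * q - 1 + 1 - ((i - 1) * q + 1) = q - 1
  omega

lemma disjoint_extraColumn {j : ℕ} (hi : 1 ≤ i) (hj : 1 ≤ j) (hij : i ≠ j) :
    Disjoint (extraColumn q i) (extraColumn q j) := by
  refine disjoint_left.2 fun x hxi hxj => hij ?_
  have hxi' := mem_filter.1 (extraColumn_subset_group hi hxi)
  have hxj' := mem_filter.1 (extraColumn_subset_group hj hxj)
  have hdiv := (Nat.div_eq_of_lt_le hxi'.2.1 hxi'.2.2).symm.trans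
    (Nat.div_eq_of_lt_le hxj'.2.1 hxj'.2.2)
  omega

variable (D : RTD (Fin (q * (q - 1))) (q - 1) q)

def HasIntervalGroups : Prop :=
  ∀ i < q - 1,
    (univ.filter fun x : Fin (q * (q - 1)) => i * q ≤ x.val ∧ x.val < (i + 1) * q) ∈ D.groups

lemma card_extraColumn_inter_block_le_one (hgroups : HasIntervalGroups D)
    (hi : 1 ≤ i) (hiq : i < q) {B : Finset (Fin (q * (q - 1)))} (hB : B ∈ D.blocks) :
    #(extraColumn q i ∩ B) ≤ 1 :=
  D.card_inter_block_le_one (hgroups (i - 1) (by omega)) (extraColumn_subset_group hi) hB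

lemma isLinearFamily_blocks_union_extraColumns (hgroups : HasIntervalGroups D)
    {m : ℕ} (hm : m < q) : IsLinearFamily (D.blocks ∪ (Icc 1 m).image (extraColumn q)) := by
  refine D.isLinearFamily_blocks.union ?_ fun B hB Y hY => ?_
  · rintro _ hX _ hY hne
    obtain ⟨i, hi, rfl⟩ := mem_image.1 hX
    obtain ⟨j, hj, rfl⟩ := mem_image.1 hY
    rw [mem_Icc] at hi hj
    rw [disjoint_iff_inter_eq_empty.1
      (disjoint_extraColumn hi.1 hj.1 fun hij => hne (congrArg (extraColumn q) hij))]
    exact zero_le_one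
  · obtain ⟨j, hj, rfl⟩ := mem_image.1 hY
    rw [mem_Icc] at hj
    rw [inter_comm]
    exact card_extraColumn_inter_block_le_one D hgroups hj.1 (by omega) hB

lemma card_filter_notMem_blocks_union_extraColumns (hgroups : HasIntervalGroups D)
    (hq : 3 ≤ q) {p : Fin (q * (q - 1))} (hp : p.val = 0) :
    #{X ∈ D.blocks ∪ (Icc 1 (q - 3)).image (extraColumn q) | p ∉ X} = q ^ 2 - 3 := by
  have hcols : ∀ X ∈ (Icc 1 (q - 3)).image (extraColumn q), p ∉ X := by
    intro X hX hpX
    obtain ⟨i, hi, rfl⟩ := mem_image.1 hX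
    rw [mem_extraColumn, hp] at hpX
    omega
  have hinj : Set.InjOn (extraColumn q) (Icc 1 (q - 3) : Set ℕ) := by
    intro i hi j hj hij
    rw [coe_Icc, Set.mem_Icc] at hi hj
    by_contra hne
    have hdisj := disjoint_extraColumn (q := q) hi.1 hj.1 hne
    rw [← hij, disjoint_self_iff_empty] at hdisj
    have := card_extraColumn (q := q) hi.1 (by omega)
    rw [hdisj, card_empty] at this
    omega
  have hdisj : Disjoint {B ∈ D.blocks | p ∉ B} ((Icc 1 (q - 3)).image (extraColumn q)) := by
    refine disjoint_left.2 fun X hX hXE => ?_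
    obtain ⟨i, hi, rfl⟩ := mem_image.1 hXE
    rw [mem_Icc] at hi
    have := card_extraColumn_inter_block_le_one D hgroups hi.1 (by omega) (mem_filter.1 hX).1
    rw [inter_self, card_extraColumn hi.1 (by omega)] at this
    omega
  rw [filter_union, filter_true_of_mem hcols, card_union_of_disjoint hdisj,
    D.card_blocks_filter_notMem, card_image_of_injOn hinj, Nat.card_Icc, sq]
  have : q ≤ q * q := Nat.le_mul_self q
  omega

end ExtraColumns

lemma floor_uniformBound_eq_sq_sub_three {q : ℕ} (hq : 3 ≤ q) :
    ⌊((q : ℚ) ^ 2 - q - 2) * ((q ^ 2 - q - 1).choose (q - 1) : ℚ) /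
        ((q ^ 2 - q - 2).choose (q - 1) : ℚ)⌋ = (q : ℤ) ^ 2 - 3 := by
  have hq2 : 3 * q ≤ q ^ 2 := by nlinarith
  rw [mul_div_assoc, show q ^ 2 - q - 2 = (q ^ 2 - q - 1) - 1 by omega,
    Nat.cast_choose_div_choose_sub_one (by omega)]
  have hk : ((q ^ 2 - q - 1 : ℕ) : ℚ) = q ^ 2 - q - 1 := by
    rw [Nat.cast_sub (by omega), Nat.cast_sub (by omega)]
    push_cast
    ring
  have hq0 : (0 : ℚ) < q := by positivity
  have hq3 : (3 : ℚ) ≤ q := by exact_mod_cast hq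
  have hval : ((q : ℚ) ^ 2 - q - 2) *
      (((q ^ 2 - q - 1 : ℕ) : ℚ) / ((q ^ 2 - q - 1 : ℕ) - (q - 1 : ℕ))) =
        q ^ 2 - 2 - 1 / q := by
    rw [hk, Nat.cast_sub (by omega), Nat.cast_one]
    rw [show (q : ℚ) ^ 2 - q - 1 - (q - 1) = q * (q - 2) by ring]
    have : (q : ℚ) - 2 ≠ 0 := by linarith
    field_simp
    ring
  rw [hval, Int.floor_eq_iff]
  have h1 : 1 / (q : ℚ) ≤ 1 := by rw [div_le_one hq0]; linarith
  have h2 : 0 < 1 / (q : ℚ) := by positivity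
  push_cast
  constructor <;> linarith

/-- For q ≥ 4 a prime power, deleting from C2(q) the first point (server)
and all items containing it yields an optimal (q-1)-uniform CBC C3(q) with n = q²-3,
N = (q-1)(q²-3) and k = m = q²-q-1, whose Hall condition holds and which attains the
uniform bound ⌊(k-1)·C(m,c)/C(k-1,c)⌋ = q²-3 with equality. -/
theorem stmt_18 (q : ℕ) (hq : 4 ≤ q)
    (D : RTD (Fin (q * (q - 1))) (q - 1) q)
    (hgroups : ∀ i < q - 1,
      (Finset.univ.filter
        (fun x : Fin (q * (q - 1)) => i * q ≤ x.val ∧ x.val < (i + 1) * q)) ∈ D.groups) :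
    let p0 : Fin (q * (q - 1)) := ⟨0, Nat.mul_pos (by omega) (by omega)⟩
    let E : ℕ → Finset (Fin (q * (q - 1))) := fun i =>
      Finset.univ.filter (fun x => (i - 1) * q + 1 ≤ x.val ∧ x.val ≤ i * q - 1)
    let Items2 := D.blocks ∪ (Finset.Icc 1 (q - 3)).image E
    let Items3 := Items2.filter (fun X => p0 ∉ X)
    Items3.card = q ^ 2 - 3 ∧
    (∀ X ∈ Items3, X.card = q - 1) ∧
    (∑ X ∈ Items3, X.card) = (q - 1) * (q ^ 2 - 3) ∧
    (Finset.univ.erase p0).card = q ^ 2 - q - 1 ∧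
    (∀ R ⊆ Items3, R.card ≤ q ^ 2 - q - 1 → R.card ≤ (R.biUnion id).card) ∧
    ⌊((q : ℚ) ^ 2 - q - 2) * ((q ^ 2 - q - 1).choose (q - 1) : ℚ) /
        ((q ^ 2 - q - 2).choose (q - 1) : ℚ)⌋ = (q : ℤ) ^ 2 - 3 := by
  intro p0 E Items2 Items3
  have hsize : ∀ X ∈ Items3, #X = q - 1 := by
    intro X hX
    rcases mem_union.1 (mem_filter.1 hX).1 with hB | hE
    · exact D.block_size X hB
    · obtain ⟨i, hi, rfl⟩ := mem_image.1 hE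
      rw [mem_Icc] at hi
      exact card_extraColumn hi.1 (by omega)
  have hcard : #Items3 = q ^ 2 - 3 :=
    card_filter_notMem_blocks_union_extraColumns D hgroups (by omega) rfl
  have hsq : q ^ 2 = (q - 1) ^ 2 + 2 * (q - 1) + 1 := by
    obtain ⟨c, rfl⟩ : ∃ c, q = c + 1 := ⟨q - 1, by omega⟩
    simp only [Nat.add_sub_cancel]
    ring
  have hV : #(univ.erase p0) = q ^ 2 - q - 1 := by
    rw [card_erase_of_mem (mem_univ _), card_univ, Fintype.card_fin, Nat.mul_sub_one, ← sq]
  have hdeg : ∀ x ∈ univ.erase p0, q - 1 ≤ #{X ∈ Items3 | x ∈ X} := fun x hx =>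
    (D.sub_one_le_card_blocks_filter_mem_notMem (ne_of_mem_erase hx)).trans <| card_le_card
      fun B hB => by
        obtain ⟨hB, hxB, hpB⟩ := by simpa only [mem_filter] using hB
        exact mem_filter.2 ⟨mem_filter.2 ⟨mem_union_left _ hB, hpB⟩, hxB⟩
  refine ⟨hcard, hsize, by rw [sum_const_nat hsize, hcard, mul_comm], hV,
    fun R hR hRV => ?_, floor_uniformBound_eq_sq_sub_three (by omega)⟩
  exact card_le_card_biUnion_of_isLinearFamily
    ((isLinearFamily_blocks_union_extraColumns D hgroups (by omega)).mono (filter_subset _ _))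
    (by omega) (fun X hX => (hsize X hX).ge) hdeg (by omega)
    (le_of_eq_of_le hcard (by rw [hV]; omega)) hR (by omega)
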